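/- arXiv:1509.06325 — 6 statements merged into one kernel-verified Lean document; each statement's English description precedes it below -/
import Mathlib

section
/- Let 0 < γ < 1, x ≥ 0, d ≥ 0 with x ≤ d. Then (x + d)^γ − d^γ ≤ γ · x^γ. -/
theorem stmt_2 (γ x d : ℝ) (hγ0 : 0 < γ) (hγ1 : γ < 1) (hx : 0 ≤ x) (hd : 0 ≤ d)
    (hxd : x ≤ d) : (x + d) ^ γ - d ^ γ ≤ γ * x ^ γ := by
  rcases eq_or_lt_of_le hx with hx0 | hx0
  · simp [← hx0]
    positivity
  have hd0 : 0 < d := lt_of_lt_of_le hx0 hxd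
  have hs : (0:ℝ) ≤ x / d := div_nonneg hx hd
  have hb : (1 + x / d) ^ γ ≤ 1 + γ * (x / d) :=
    rpow_one_add_le_one_add_mul_self (by linarith) hγ0.le hγ1.le
  have hxd' : x + d = d * (1 + x / d) := by field_simp; ring
  have h1 : (x + d) ^ γ ≤ d ^ γ * (1 + γ * (x / d)) := by
    rw [hxd', Real.mul_rpow hd (by linarith)]
    exact mul_le_mul_of_nonneg_left hb (Real.rpow_nonneg hd γ)
  have h2 : d ^ γ * (1 + γ * (x / d)) = d ^ γ + γ * (d ^ (γ - 1) * x) := by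
    have : d ^ γ / d = d ^ (γ - 1) := by
      rw [Real.rpow_sub hd0, Real.rpow_one]
    field_simp
    rw [← this]
    field_simp
  have h3 : d ^ (γ - 1) ≤ x ^ (γ - 1) :=
    Real.rpow_le_rpow_of_nonpos hx0 hxd (by linarith)
  have h4 : d ^ (γ - 1) * x ≤ x ^ γ := by
    calc d ^ (γ - 1) * x ≤ x ^ (γ - 1) * x := by nlinarith
    _ = x ^ γ := by
      rw [← Real.rpow_add_one hx0.ne']
      norm_num
  nlinarith [h1, h2, h3, h4]
end

section
/- Let 0 < γ ≤ 1 (with γ = 1/k for some positive integer k), and let u, φ : {x, y} → ℝ with 0 ≤ u ≤ φ ≤ 1 at both points. Suppose |u(x) − u(y)| ≤ 4|φ(x) − φ(y)|. Then |u^{γ+1}(y)/φ^γ(y) − u^{γ+1}(x)/φ^γ(x)| ≤ 14·|φ(x) − φ(y)|. -/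
/-- If `0 ≤ b ≤ q ≤ 1` and `0 < γ`, then `b^(γ+1)/q^γ ≤ q`. -/
lemma aux_f_le (γ : ℝ) (hγ : 0 < γ) (b q : ℝ) (hb : 0 ≤ b) (hbq : b ≤ q) (hq1 : q ≤ 1) :
    b ^ (γ + 1) / q ^ γ ≤ q := by
  rcases eq_or_lt_of_le (hb.trans hbq) with hq0 | hq0
  · have hb0 : b = 0 := le_antisymm (hbq.trans hq0.symm.le) hb
    rw [hb0, Real.zero_rpow (by linarith : γ + 1 ≠ 0), zero_div, ← hq0]
  · have hqγ : 0 < q ^ γ := Real.rpow_pos_of_pos hq0 γ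
    rw [div_le_iff₀ hqγ]
    calc b ^ (γ + 1) ≤ q ^ (γ + 1) := Real.rpow_le_rpow hb hbq (by linarith)
    _ = q ^ γ * q ^ (1 : ℝ) := by
        rw [← Real.rpow_add' hq0.le (by linarith : γ + 1 ≠ 0)]
    _ = q * q ^ γ := by rw [Real.rpow_one]; ring

/-- Geometric sum estimate for natural powers. -/
lemma aux_pow_sub (S T : ℝ) (hS : 0 ≤ S) (hT : 0 ≤ T) (k : ℕ) (hk : 0 < k) :
    |T - S| * S ^ (k - 1) ≤ |T ^ k - S ^ k| := by
  have h := geom_sum₂_mul T S k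
  have hterm : ∀ i ∈ Finset.range k, 0 ≤ T ^ i * S ^ (k - 1 - i) := fun i _ =>
    mul_nonneg (pow_nonneg hT i) (pow_nonneg hS _)
  have hSig0 : 0 ≤ ∑ i ∈ Finset.range k, T ^ i * S ^ (k - 1 - i) := Finset.sum_nonneg hterm
  have hSig : S ^ (k - 1) ≤ ∑ i ∈ Finset.range k, T ^ i * S ^ (k - 1 - i) := by
    calc S ^ (k - 1) = T ^ 0 * S ^ (k - 1 - 0) := by simp
    _ ≤ _ := Finset.single_le_sum hterm (Finset.mem_range.mpr hk)
  calc |T - S| * S ^ (k - 1)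
      ≤ |T - S| * (∑ i ∈ Finset.range k, T ^ i * S ^ (k - 1 - i)) :=
        mul_le_mul_of_nonneg_left hSig (abs_nonneg _)
  _ = |T ^ k - S ^ k| := by rw [← h, abs_mul, mul_comm, abs_of_nonneg hSig0]

theorem stmt_12 (k : ℕ) (hk : 0 < k) (γ : ℝ) (hγ : γ = 1 / (k : ℝ))
    (ux uy px py : ℝ)
    (hux0 : 0 ≤ ux) (huxp : ux ≤ px) (hpx1 : px ≤ 1)
    (huy0 : 0 ≤ uy) (huyp : uy ≤ py) (hpy1 : py ≤ 1)
    (hclose : |ux - uy| ≤ 4 * |px - py|) :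
    |uy ^ (γ + 1) / py ^ γ - ux ^ (γ + 1) / px ^ γ| ≤ 14 * |px - py| := by
  have hkR : (1 : ℝ) ≤ (k : ℝ) := by exact_mod_cast hk
  have hγpos : 0 < γ := by rw [hγ]; positivity
  have hγle : γ ≤ 1 := by rw [hγ]; exact div_le_one_of_le₀ hkR (by positivity)
  have hpx0 : 0 ≤ px := hux0.trans huxp
  have hpy0 : 0 ≤ py := huy0.trans huyp
  rcases eq_or_lt_of_le hpx0 with hp | hp
  · -- px = 0, hence ux = 0
    have hux : ux = 0 := le_antisymm (huxp.trans hp.symm.le) hux0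
    have hfx : ux ^ (γ + 1) / px ^ γ = 0 := by
      rw [hux, Real.zero_rpow (by linarith : γ + 1 ≠ 0), zero_div]
    have hfy0 : 0 ≤ uy ^ (γ + 1) / py ^ γ :=
      div_nonneg (Real.rpow_nonneg huy0 _) (Real.rpow_nonneg hpy0 _)
    have hfy : uy ^ (γ + 1) / py ^ γ ≤ py := aux_f_le γ hγpos uy py huy0 huyp hpy1
    rw [hfx, sub_zero, abs_of_nonneg hfy0, ← hp, zero_sub, abs_neg, abs_of_nonneg hpy0]
    linarith
  rcases eq_or_lt_of_le hpy0 with hq | hq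
  · -- py = 0, hence uy = 0
    have huy : uy = 0 := le_antisymm (huyp.trans hq.symm.le) huy0
    have hfy : uy ^ (γ + 1) / py ^ γ = 0 := by
      rw [huy, Real.zero_rpow (by linarith : γ + 1 ≠ 0), zero_div]
    have hfx0 : 0 ≤ ux ^ (γ + 1) / px ^ γ :=
      div_nonneg (Real.rpow_nonneg hux0 _) (Real.rpow_nonneg hpx0 _)
    have hfx : ux ^ (γ + 1) / px ^ γ ≤ px := aux_f_le γ hγpos ux px hux0 huxp hpx1
    rw [hfy, zero_sub, abs_neg, abs_of_nonneg hfx0, ← hq, sub_zero, abs_of_nonneg hpx0]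
    linarith
  -- main case: 0 < px, 0 < py
  set s : ℝ := ux / px with hs_def
  set t : ℝ := uy / py with ht_def
  have hs0 : 0 ≤ s := div_nonneg hux0 hpx0
  have ht0 : 0 ≤ t := div_nonneg huy0 hpy0
  have hs1 : s ≤ 1 := div_le_one_of_le₀ huxp hpx0
  have ht1 : t ≤ 1 := div_le_one_of_le₀ huyp hpy0
  set S : ℝ := s ^ γ with hS_def
  set T : ℝ := t ^ γ with hT_def
  have hS0 : 0 ≤ S := Real.rpow_nonneg hs0 _
  have hT0 : 0 ≤ T := Real.rpow_nonneg ht0 _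
  have hT1 : T ≤ 1 := Real.rpow_le_one ht0 ht1 hγpos.le
  have hγ' : γ = ((k : ℝ))⁻¹ := by rw [hγ, one_div]
  -- rewrite the two fractions
  have hfx : ux ^ (γ + 1) / px ^ γ = ux * S := by
    rw [hS_def, hs_def, Real.div_rpow hux0 hpx0,
      Real.rpow_add' hux0 (by linarith : γ + 1 ≠ 0), Real.rpow_one]
    ring
  have hfy : uy ^ (γ + 1) / py ^ γ = uy * T := by
    rw [hT_def, ht_def, Real.div_rpow huy0 hpy0,
      Real.rpow_add' huy0 (by linarith : γ + 1 ≠ 0), Real.rpow_one]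
    ring
  have habs : 0 ≤ |px - py| := abs_nonneg _
  -- first piece
  have key1 : |(uy - ux) * T| ≤ 4 * |px - py| := by
    rw [abs_mul]
    calc |uy - ux| * |T| ≤ (4 * |px - py|) * 1 := by
          apply mul_le_mul _ _ (abs_nonneg _) (by linarith)
          · rw [abs_sub_comm]; exact hclose
          · rw [abs_of_nonneg hT0]; exact hT1
    _ = 4 * |px - py| := by ring
  -- second piece
  have key2 : ux * |T - S| ≤ 5 * |px - py| := by
    rcases eq_or_lt_of_le hux0 with hux | hux
    · rw [← hux, zero_mul]; positivity
    have hs_pos : 0 < s := div_pos hux hp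
    -- step A : |T - S| * S ^ (k-1) ≤ |t - s|
    have hA : |T - S| * S ^ (k - 1) ≤ |t - s| := by
      have hTk : T ^ k = t := by rw [hT_def, hγ']; exact Real.rpow_inv_natCast_pow ht0 hk.ne'
      have hSk : S ^ k = s := by rw [hS_def, hγ']; exact Real.rpow_inv_natCast_pow hs0 hk.ne'
      have := aux_pow_sub S T hS0 hT0 k hk
      rwa [hTk, hSk] at this
    -- step B : ux ≤ px * S ^ (k-1)
    have hB : ux ≤ px * S ^ (k - 1) := by
      have hcast : ((k - 1 : ℕ) : ℝ) = (k : ℝ) - 1 := by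
        rw [Nat.cast_sub hk]; norm_num
      have hSk1 : S ^ (k - 1) = s ^ (1 - γ) := by
        rw [hS_def, ← Real.rpow_natCast (s ^ γ) (k - 1), ← Real.rpow_mul hs0, hcast]
        congr 1
        rw [hγ]
        field_simp
      have hmono : s ≤ s ^ (1 - γ) := by
        calc s = s ^ (1 : ℝ) := (Real.rpow_one s).symm
        _ ≤ s ^ (1 - γ) := Real.rpow_le_rpow_of_exponent_ge hs_pos hs1 (by linarith)
      have hux_eq : ux = px * s := by
        rw [hs_def]; field_simp
      rw [hux_eq, hSk1]
      exact mul_le_mul_of_nonneg_left hmono hp.le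
    -- step C : px * |t - s| ≤ 5 * |px - py|
    have hC : px * |t - s| ≤ 5 * |px - py| := by
      have hnum : |uy * px - ux * py| ≤ 5 * (py * |px - py|) := by
        have heq : uy * px - ux * py = uy * (px - py) + py * (uy - ux) := by ring
        calc |uy * px - ux * py| ≤ |uy * (px - py)| + |py * (uy - ux)| := by
              rw [heq]; exact abs_add_le _ _
        _ = uy * |px - py| + py * |uy - ux| := by
              rw [abs_mul, abs_mul, abs_of_nonneg huy0, abs_of_nonneg hpy0]
        _ ≤ py * |px - py| + py * (4 * |px - py|) := by
              have h1 : uy * |px - py| ≤ py * |px - py| :=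
                mul_le_mul_of_nonneg_right huyp habs
              have h2 : py * |uy - ux| ≤ py * (4 * |px - py|) := by
                apply mul_le_mul_of_nonneg_left _ hpy0
                rw [abs_sub_comm]; exact hclose
              linarith
        _ = 5 * (py * |px - py|) := by ring
      have hts0 : px * (t - s) = (uy * px - ux * py) / py := by
        rw [ht_def, hs_def]; field_simp
      have hts : px * |t - s| = |uy * px - ux * py| / py := by
        calc px * |t - s| = |px * (t - s)| := by rw [abs_mul, abs_of_pos hp]
        _ = |(uy * px - ux * py) / py| := by rw [hts0]
        _ = |uy * px - ux * py| / py := by rw [abs_div, abs_of_pos hq]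
      rw [hts, div_le_iff₀ hq]
      calc |uy * px - ux * py| ≤ 5 * (py * |px - py|) := hnum
      _ = 5 * |px - py| * py := by ring
    -- combine
    calc ux * |T - S| ≤ px * S ^ (k - 1) * |T - S| :=
          mul_le_mul_of_nonneg_right hB (abs_nonneg _)
    _ = px * (|T - S| * S ^ (k - 1)) := by ring
    _ ≤ px * |t - s| := mul_le_mul_of_nonneg_left hA hp.le
    _ ≤ 5 * |px - py| := hC
  -- finish
  rw [hfx, hfy]
  have hsplit : uy * T - ux * S = (uy - ux) * T + ux * (T - S) := by ring
  calc |uy * T - ux * S| ≤ |(uy - ux) * T| + |ux * (T - S)| := by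
        rw [hsplit]; exact abs_add_le _ _
  _ ≤ 4 * |px - py| + 5 * |px - py| := by
        refine add_le_add key1 ?_
        rw [abs_mul, abs_of_nonneg hux0]; exact key2
  _ ≤ 14 * |px - py| := by linarith
end

section
/- Let γ = 1/k for a positive integer k, and let u, φ satisfy 0 ≤ u(z) ≤ φ(z) ≤ 1 at two points x, y, with φ(x), φ(y) > 0. Suppose |u(x) − u(y)| ≥ 4|φ(x) − φ(y)| and u^{γ+1}(y)/φ^γ(y) − u^{γ+1}(x)/φ^γ(x) ≥ 0. Then (2/5)·(4/5)^γ · ((u−φ)₋(x) − (u−φ)₋(y))^{1+γ} ≤ u^{γ+1}(y)/φ^γ(y) − u^{γ+1}(x)/φ^γ(x) ≤ (14/3)·((u−φ)₋(x) − (u−φ)₋(y)), and in particular (u−φ)₋(x) − (u−φ)₋(y) ≥ 0. -/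
/-!
The quantity is the increment of `g(u, φ) = u ^ (γ + 1) / φ ^ γ`, the perspective of the convex
function `t ↦ t ^ (γ + 1)`. For `u ≤ φ`, `∂g/∂u = (γ + 1) (u / φ) ^ γ ≤ γ + 1` and
`|∂g/∂φ| = γ (u / φ) ^ (γ + 1) ≤ γ (u / φ) ^ γ`, so by concavity of `t ↦ t ^ γ` the change of `φ`
costs at most `γ u ^ γ |φ(x) - φ(y)| / φ ^ γ`. Since `4 |φ(x) - φ(y)| ≤ |u(x) - u(y)|`, this is
dominated by the change of `u`, which by convexity and superadditivity of `t ↦ t ^ (γ + 1)` is at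
least `(u(y) - u(x)) ^ (γ + 1) / 2 + u ^ γ (u(y) - u(x)) / 4`. This forces `u(x) ≤ u(y)` and gives
both bounds, as `(φ - u)(x) - (φ - u)(y)` lies between `3/4` and `5/4` of `u(y) - u(x)`.
-/

open Real

namespace Real

theorem rpow_succ_add_mul_sub_le {s t u : ℝ} (hs : 0 ≤ s) (ht : 0 ≤ t) (hu : 0 ≤ u) :
    t ^ (s + 1) + (s + 1) * t ^ s * (u - t) ≤ u ^ (s + 1) := by
  have hs1 : 0 < s + 1 := by linarith
  have amgm := geom_mean_le_arith_mean2_weighted (by positivity : 0 ≤ 1 / (s + 1))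
    (by positivity : 0 ≤ s / (s + 1)) (rpow_nonneg hu (s + 1)) (rpow_nonneg ht (s + 1))
    (by rw [← add_div, add_comm, div_self hs1.ne'])
  rw [← rpow_mul hu, ← rpow_mul ht, mul_one_div_cancel hs1.ne', rpow_one,
    mul_div_cancel₀ _ hs1.ne'] at amgm
  rw [rpow_add_one' ht hs1.ne'] at amgm ⊢
  have := mul_le_mul_of_nonneg_left amgm hs1.le
  field_simp at this
  linarith

theorem mul_rpow_sub_rpow_le {s p q : ℝ} (hs0 : 0 ≤ s) (hs1 : s ≤ 1) (hp : 0 ≤ p) (hq : 0 ≤ q) :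
    p * (q ^ s - p ^ s) ≤ s * p ^ s * (q - p) := by
  have amgm := geom_mean_le_arith_mean2_weighted hs0 (sub_nonneg.2 hs1) hq hp (by ring)
  have hpp : p ^ (1 - s) * p ^ s = p := by
    rw [← rpow_add' hp (by ring_nf; exact one_ne_zero), sub_add_cancel, rpow_one]
  have := mul_le_mul_of_nonneg_right amgm (rpow_nonneg hp s)
  linear_combination this - q ^ s * hpp

theorem mul_rpow_sub_rpow_le_abs {s a p q : ℝ} (hs0 : 0 ≤ s) (hs1 : s ≤ 1) (ha : 0 ≤ a)
    (hap : a ≤ p) (hq : 0 ≤ q) :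
    a * (q ^ s - p ^ s) ≤ s * p ^ s * |q - p| := by
  have hp : 0 ≤ p := ha.trans hap
  rcases le_total q p with hqp | hpq
  · have : q ^ s - p ^ s ≤ 0 := sub_nonpos.2 (rpow_le_rpow hq hqp hs0)
    calc a * (q ^ s - p ^ s) ≤ 0 := mul_nonpos_of_nonneg_of_nonpos ha this
      _ ≤ s * p ^ s * |q - p| := by positivity
  · have hqs : p ^ s ≤ q ^ s := rpow_le_rpow hp hpq hs0
    calc a * (q ^ s - p ^ s) ≤ p * (q ^ s - p ^ s) :=
          mul_le_mul_of_nonneg_right hap (sub_nonneg.2 hqs)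
      _ ≤ s * p ^ s * (q - p) := mul_rpow_sub_rpow_le hs0 hs1 hp hq
      _ = s * p ^ s * |q - p| := by rw [abs_of_nonneg (sub_nonneg.2 hpq)]

end Real

theorem half_sub_rpow_succ_add_le {s a b : ℝ} (hs : 0 ≤ s) (ha : 0 ≤ a) (hab : a ≤ b) :
    1 / 2 * (b - a) ^ (s + 1) + a ^ s * (b - a) / 4 ≤ b ^ (s + 1) - a ^ (s + 1) := by
  have hs1 : s + 1 ≠ 0 := by linarith
  have hd : 0 ≤ b - a := sub_nonneg.2 hab
  have hb : 0 ≤ b := ha.trans hab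
  have superadd : a ^ (s + 1) + (b - a) ^ (s + 1) ≤ b ^ (s + 1) := by
    rw [rpow_add_one' ha hs1, rpow_add_one' hd hs1, rpow_add_one' hb hs1]
    linarith [mul_le_mul_of_nonneg_right (rpow_le_rpow ha hab hs) ha,
      mul_le_mul_of_nonneg_right (rpow_le_rpow hd (sub_le_self b ha) hs) hd]
  have tangent := rpow_succ_add_mul_sub_le hs ha hb
  rw [rpow_add_one' hd hs1] at superadd ⊢
  rcases le_total (a ^ s) (2 * (b - a) ^ s) with h | h
  · linarith [mul_le_mul_of_nonneg_right h hd]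
  · have := mul_nonneg (rpow_nonneg ha s) hd
    linarith [mul_le_mul_of_nonneg_right h hd, mul_nonneg hs this]

theorem sub_rpow_succ_div_rpow_le {s a b p q : ℝ} (hs0 : 0 ≤ s) (hs1 : s ≤ 1) (ha : 0 ≤ a)
    (hab : a ≤ b) (hbq : b ≤ q) (hap : a ≤ p) (hp : 0 < p) (hq : 0 < q) :
    b ^ (s + 1) / q ^ s - a ^ (s + 1) / p ^ s ≤ (s + 1) * (b - a) + s * |p - q| := by
  have hs : s + 1 ≠ 0 := by linarith
  have hb : 0 ≤ b := ha.trans hab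
  have hP := rpow_pos_of_pos hp s
  have hQ := rpow_pos_of_pos hq s
  have hX : a ^ s ≤ p ^ s := rpow_le_rpow ha hap hs0
  have hY : b ^ s ≤ q ^ s := rpow_le_rpow hb hbq hs0
  have along_u : b ^ s * b - a ^ s * a ≤ (s + 1) * (b - a) * q ^ s := by
    have := rpow_succ_add_mul_sub_le hs0 hb ha
    rw [rpow_add_one' ha hs, rpow_add_one' hb hs] at this
    have hslope : 0 ≤ (s + 1) * (b - a) := mul_nonneg (by linarith) (sub_nonneg.2 hab)
    linarith [mul_le_mul_of_nonneg_left hY hslope]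
  have along_φ : a ^ s * (a * (p ^ s - q ^ s)) ≤ p ^ s * (s * q ^ s * |p - q|) :=
    (mul_le_mul_of_nonneg_left (mul_rpow_sub_rpow_le_abs hs0 hs1 ha (hab.trans hbq) hp.le)
      (rpow_nonneg ha s)).trans
    (mul_le_mul_of_nonneg_right hX (mul_nonneg (mul_nonneg hs0 hQ.le) (abs_nonneg _)))
  rw [div_sub_div _ _ hQ.ne' hP.ne', div_le_iff₀ (mul_pos hQ hP),
    rpow_add_one' ha hs, rpow_add_one' hb hs]
  linarith [mul_le_mul_of_nonneg_left along_u hP.le]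

theorem rpow_succ_sub_sub_le_rpow_mul_sub {s a b p q : ℝ} (hs0 : 0 ≤ s) (hs1 : s ≤ 1)
    (ha : 0 ≤ a) (hap : a ≤ p) (hp : 0 < p) (hq : 0 < q) :
    b ^ (s + 1) - a ^ (s + 1) - s * a ^ s * |p - q|
      ≤ q ^ s * (b ^ (s + 1) / q ^ s - a ^ (s + 1) / p ^ s) := by
  have hP := rpow_pos_of_pos hp s
  have hQ := rpow_pos_of_pos hq s
  have along_φ : a ^ s * (a * (q ^ s - p ^ s)) ≤ a ^ s * (s * p ^ s * |q - p|) :=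
    mul_le_mul_of_nonneg_left (mul_rpow_sub_rpow_le_abs hs0 hs1 ha hap hq.le) (rpow_nonneg ha s)
  rw [mul_sub, mul_div_cancel₀ _ hQ.ne', abs_sub_comm, rpow_add_one' ha (by linarith),
    sub_sub, sub_le_sub_iff_left, mul_div_assoc', div_le_iff₀ hP]
  linarith

theorem half_rpow_le_rpow_mul_sub {s a b p q : ℝ} (hs0 : 0 ≤ s) (hs1 : s ≤ 1) (ha : 0 ≤ a)
    (hab : a ≤ b) (hap : a ≤ p) (hp : 0 < p) (hq : 0 < q) (hpq : 4 * |p - q| ≤ b - a) :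
    1 / 2 * (b - a) ^ (s + 1) ≤ q ^ s * (b ^ (s + 1) / q ^ s - a ^ (s + 1) / p ^ s) := by
  have hpq' : s * a ^ s * |p - q| ≤ a ^ s * (b - a) / 4 := by
    have hX := rpow_nonneg ha s
    linarith [mul_le_mul_of_nonneg_right hs1 (mul_nonneg hX (abs_nonneg (p - q))),
      mul_le_mul_of_nonneg_left hpq hX]
  calc 1 / 2 * (b - a) ^ (s + 1) ≤ b ^ (s + 1) - a ^ (s + 1) - s * a ^ s * |p - q| := by
        linarith [half_sub_rpow_succ_add_le hs0 ha hab]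
    _ ≤ q ^ s * (b ^ (s + 1) / q ^ s - a ^ (s + 1) / p ^ s) :=
        rpow_succ_sub_sub_le_rpow_mul_sub hs0 hs1 ha hap hp hq

theorem two_fifths_mul_rpow_le {s δ d : ℝ} (hs : 0 ≤ s) (hδ : 0 ≤ δ) (hδd : δ ≤ 5 / 4 * d) :
    2 / 5 * (4 / 5) ^ s * δ ^ (1 + s) ≤ 1 / 2 * d ^ (s + 1) := by
  have : 2 / 5 * (4 / 5 : ℝ) ^ s * δ ^ (1 + s) = 1 / 2 * (4 / 5 * δ) ^ (1 + s) := by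
    rw [mul_rpow (by norm_num) hδ, rpow_add (by norm_num : (0 : ℝ) < 4 / 5), rpow_one]
    ring
  rw [this, add_comm 1 s]
  gcongr
  linarith

theorem stmt_13_general (k : ℕ) (γ : ℝ) (hγ : γ = 1 / (k : ℝ))
    (ux uy px py : ℝ)
    (hux0 : 0 ≤ ux) (huxp : ux ≤ px) (hpx0 : 0 < px)
    (huy0 : 0 ≤ uy) (huyp : uy ≤ py) (hpy1 : py ≤ 1) (hpy0 : 0 < py)
    (hfar : 4 * |px - py| ≤ |ux - uy|)
    (hsign : 0 ≤ uy ^ (γ + 1) / py ^ γ - ux ^ (γ + 1) / px ^ γ) :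
    (2 / 5) * (4 / 5) ^ γ * ((px - ux) - (py - uy)) ^ (1 + γ)
        ≤ uy ^ (γ + 1) / py ^ γ - ux ^ (γ + 1) / px ^ γ ∧
    uy ^ (γ + 1) / py ^ γ - ux ^ (γ + 1) / px ^ γ
        ≤ (14 / 3) * ((px - ux) - (py - uy)) ∧
    0 ≤ (px - ux) - (py - uy) := by
  have hγ0 : 0 ≤ γ := hγ ▸ by positivity
  have hγ1 : γ ≤ 1 := by rw [hγ, one_div]; exact Nat.cast_inv_le_one k
  have hab : ux ≤ uy := by
    by_contra! hba
    rw [abs_of_pos (sub_pos.2 hba), abs_sub_comm px py] at hfar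
    have hlow := half_rpow_le_rpow_mul_sub hγ0 hγ1 huy0 hba.le huyp hpy0 hpx0 hfar
    have := pos_of_mul_pos_right ((by positivity : (0 : ℝ) < 1 / 2 * (ux - uy) ^ (γ + 1)).trans_le
      hlow) (rpow_nonneg hpx0.le γ)
    linarith
  rw [abs_sub_comm ux uy, abs_of_nonneg (sub_nonneg.2 hab)] at hfar
  have hpq := abs_le.1 (by linarith : |px - py| ≤ (uy - ux) / 4)
  refine ⟨?_, ?_, by linarith⟩
  · calc 2 / 5 * (4 / 5) ^ γ * ((px - ux) - (py - uy)) ^ (1 + γ)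
          ≤ 1 / 2 * (uy - ux) ^ (γ + 1) := two_fifths_mul_rpow_le hγ0 (by linarith) (by linarith)
      _ ≤ py ^ γ * (uy ^ (γ + 1) / py ^ γ - ux ^ (γ + 1) / px ^ γ) :=
          half_rpow_le_rpow_mul_sub hγ0 hγ1 hux0 hab huxp hpx0 hpy0 hfar
      _ ≤ uy ^ (γ + 1) / py ^ γ - ux ^ (γ + 1) / px ^ γ :=
          mul_le_of_le_one_left hsign (rpow_le_one hpy0.le hpy1 hγ0)
  · have hupper := sub_rpow_succ_div_rpow_le hγ0 hγ1 hux0 hab huyp huxp hpx0 hpy0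
    linarith [mul_le_mul_of_nonneg_right hγ1 (abs_nonneg (px - py)),
      mul_le_mul_of_nonneg_right hγ1 (sub_nonneg.2 hab)]

theorem stmt_13 (k : ℕ) (hk : 0 < k) (γ : ℝ) (hγ : γ = 1 / (k : ℝ))
    (ux uy px py : ℝ)
    (hux0 : 0 ≤ ux) (huxp : ux ≤ px) (hpx1 : px ≤ 1) (hpx0 : 0 < px)
    (huy0 : 0 ≤ uy) (huyp : uy ≤ py) (hpy1 : py ≤ 1) (hpy0 : 0 < py)
    (hfar : 4 * |px - py| ≤ |ux - uy|)
    (hsign : 0 ≤ uy ^ (γ + 1) / py ^ γ - ux ^ (γ + 1) / px ^ γ) :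
    (2 / 5) * (4 / 5) ^ γ * ((px - ux) - (py - uy)) ^ (1 + γ)
        ≤ uy ^ (γ + 1) / py ^ γ - ux ^ (γ + 1) / px ^ γ ∧
    uy ^ (γ + 1) / py ^ γ - ux ^ (γ + 1) / px ^ γ
        ≤ (14 / 3) * ((px - ux) - (py - uy)) ∧
    0 ≤ (px - ux) - (py - uy) :=
  stmt_13_general k γ hγ ux uy px py hux0 huxp hpx0 huy0 huyp hpy1 hpy0 hfar hsign
end

section
/- Let 0 < γ < 1, let ℓ > 0, μ ≥ 0, υ ≥ 0 with υ ≤ 4μ and ℓ − υ ≥ 0, ℓ + μ > 0. Then ℓ − (ℓ − υ)^{1+γ}/(ℓ + μ)^γ ≤ 14·μ. -/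
theorem stmt_14 (γ l μ υ : ℝ) (hγ0 : 0 < γ) (hγ1 : γ < 1)
    (hl : 0 < l) (hμ : 0 ≤ μ) (hυ : 0 ≤ υ) (hυμ : υ ≤ 4 * μ)
    (hlυ : 0 ≤ l - υ) (hlμ : 0 < l + μ) :
    l - (l - υ) ^ (1 + γ) / (l + μ) ^ γ ≤ 14 * μ := by
  rcases eq_or_lt_of_le hlυ with h0 | h0
  · rw [← h0, Real.zero_rpow (by linarith)]
    have : l = υ := by linarith
    have := Real.rpow_pos_of_pos hlμ γ
    rw [zero_div]
    linarith
  · have key : (l - υ) ^ (1 + γ) / (l + μ) ^ γ = (l - υ) * ((l - υ) / (l + μ)) ^ γ := by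
      rw [Real.div_rpow hlυ hlμ.le, Real.rpow_add h0, Real.rpow_one]
      ring
    rw [key]
    have hx1 : (l - υ) / (l + μ) ≤ 1 := by
      rw [div_le_one hlμ]; linarith
    have hx0 : 0 < (l - υ) / (l + μ) := div_pos h0 hlμ
    have hmono : (l - υ) / (l + μ) ≤ ((l - υ) / (l + μ)) ^ γ := by
      nth_rewrite 1 [← Real.rpow_one ((l - υ) / (l + μ))]
      exact Real.rpow_le_rpow_of_exponent_ge hx0 hx1 hγ1.le
    have h1 : (l - υ) * ((l - υ) / (l + μ)) ≤ (l - υ) * ((l - υ) / (l + μ)) ^ γ :=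
      mul_le_mul_of_nonneg_left hmono h0.le
    have h2 : (l - υ) * ((l - υ) / (l + μ)) = (l - υ) ^ 2 / (l + μ) := by ring
    rw [h2] at h1
    have h4 : l - 14 * μ ≤ (l - υ) ^ 2 / (l + μ) := by
      rw [le_div_iff₀ hlμ]
      nlinarith
    linarith
end

section
/- Let 0 < τ < α < 1 and define h(t) = max(|t|^τ − 1, 0) for t ∈ ℝ. Then for every t ∈ ℝ the integral (α/Γ(1−α)) ∫_{−∞}^t (h(t) − h(s))/(t−s)^{1+α} ds is bounded below by −c for a finite constant c depending only on τ and α; i.e., the one-sided fractional derivative of h of order α is bounded below uniformly in t. -/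
/-!
Put `m = max |t| 1`, so that `h = max |·| 1 ^ τ - 1` and `h t = m ^ τ - 1`. For `-m ≤ s < t` we
have `h s ≤ h t`, so only `s < -m` contributes negatively. There, with `u = -m - s ≤ t - s`,
concavity of `x ↦ x ^ τ` gives `h s - h t = (m + u) ^ τ - m ^ τ ≤ min (τ u) (u ^ τ)`, so the
integrand is at least `-min (τ u ^ (-α)) (u ^ (τ - 1 - α))`. Since `α < 1` and `τ < α`, this bound
is integrable in `u` over `(0, ∞)`, and its integral (times `α / Γ(1 - α)`) is the constant.
-/

open MeasureTheory Set

theorem neg_integral_le_setIntegral_of_neg_le {X : Type*} [MeasurableSpace X] {μ : Measure X}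
    {f B : X → ℝ} {s : Set X} (hs : MeasurableSet s) (hB : Integrable B μ) (hB0 : 0 ≤ B)
    (hfB : ∀ x ∈ s, -B x ≤ f x) :
    -∫ x, B x ∂μ ≤ ∫ x in s, f x ∂μ := by
  by_cases hf : IntegrableOn f s μ
  · calc -∫ x, B x ∂μ ≤ -∫ x in s, B x ∂μ :=
          neg_le_neg (setIntegral_le_integral hB (ae_of_all _ hB0))
      _ = ∫ x in s, -B x ∂μ := (integral_neg B).symm
      _ ≤ ∫ x in s, f x ∂μ := setIntegral_mono_on hB.neg.integrableOn hf hs hfB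
  · rw [integral_undef hf, neg_nonpos]
    exact integral_nonneg hB0

namespace Real

theorem rpow_add_sub_rpow_le_mul {τ m u : ℝ} (hτ0 : 0 ≤ τ) (hτ1 : τ ≤ 1) (hm : 1 ≤ m)
    (hu : 0 ≤ u) : (m + u) ^ τ - m ^ τ ≤ τ * u := by
  have hm0 : 0 < m := one_pos.trans_le hm
  have hbern : (1 + u / m) ^ τ ≤ 1 + τ * (u / m) :=
    rpow_one_add_le_one_add_mul_self (by linarith [div_nonneg hu hm0.le]) hτ0 hτ1
  have hscale : m ^ (τ - 1) ≤ 1 := rpow_le_one_of_one_le_of_nonpos hm (by linarith)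
  calc (m + u) ^ τ - m ^ τ = m ^ τ * ((1 + u / m) ^ τ - 1) := by
        have hsplit : m + u = m * (1 + u / m) := by field_simp
        rw [hsplit, mul_rpow hm0.le (by positivity)]
        ring
    _ ≤ m ^ τ * (τ * (u / m)) := by gcongr; linarith
    _ = τ * u * m ^ (τ - 1) := by rw [rpow_sub_one hm0.ne']; field_simp
    _ ≤ τ * u := mul_le_of_le_one_right (by positivity) hscale

theorem rpow_add_sub_rpow_le_min {τ m u : ℝ} (hτ0 : 0 ≤ τ) (hτ1 : τ ≤ 1) (hm : 1 ≤ m)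
    (hu : 0 ≤ u) : (m + u) ^ τ - m ^ τ ≤ min (τ * u) (u ^ τ) :=
  le_min (rpow_add_sub_rpow_le_mul hτ0 hτ1 hm hu)
    (sub_le_iff_le_add'.2 (rpow_add_le_add_rpow (zero_le_one.trans hm) hu hτ0 hτ1))

theorem max_rpow_sub_one_zero_eq {τ x : ℝ} (hτ : 0 ≤ τ) (hx : 0 ≤ x) :
    max (x ^ τ - 1) 0 = max x 1 ^ τ - 1 := by
  rw [rpow_max hx zero_le_one hτ, one_rpow, ← max_sub_sub_right, sub_self]

end Real

open Real

/-- The lower bound `-min (τ u, u ^ τ) / u ^ (1 + α)` of the integrand at `u = -max |t| 1 - s`;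
the first term of the minimum is integrable at `0`, the second at `∞`. -/
noncomputable def tailBound (τ α : ℝ) : ℝ → ℝ :=
  (Ioi 0).indicator fun u => min (τ * u ^ (-α)) (u ^ (τ - 1 - α))

theorem min_rpow_nonneg {τ α u : ℝ} (hτ : 0 ≤ τ) (hu : 0 ≤ u) :
    0 ≤ min (τ * u ^ (-α)) (u ^ (τ - 1 - α)) :=
  le_min (mul_nonneg hτ (rpow_nonneg hu _)) (rpow_nonneg hu _)

theorem tailBound_nonneg {τ : ℝ} (hτ : 0 ≤ τ) (α : ℝ) : 0 ≤ tailBound τ α :=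
  indicator_nonneg fun _ hu => min_rpow_nonneg hτ (le_of_lt hu)

theorem integrable_tailBound {τ α : ℝ} (hτ0 : 0 ≤ τ) (hτα : τ < α) (hα1 : α < 1) :
    Integrable (tailBound τ α) := by
  set G : ℝ → ℝ := fun u => min (τ * u ^ (-α)) (u ^ (τ - 1 - α))
  have hG : AEStronglyMeasurable G := by fun_prop
  have hnorm : ∀ u ∈ Ioi (0 : ℝ), ‖G u‖ = G u := fun u hu =>
    norm_of_nonneg (min_rpow_nonneg hτ0 (le_of_lt hu))
  have hnear : IntegrableOn G (Ioc 0 1) := by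
    refine Integrable.mono'
      ((intervalIntegral.intervalIntegrable_rpow' (r := -α) (by linarith)).1.const_mul τ)
      hG.restrict ((ae_restrict_iff' measurableSet_Ioc).2 (ae_of_all _ fun u hu => ?_))
    rw [hnorm u hu.1]
    exact min_le_left (τ * u ^ (-α)) _
  have hfar : IntegrableOn G (Ioi 1) := by
    refine Integrable.mono' (integrableOn_Ioi_rpow_of_lt (by linarith : τ - 1 - α < -1) one_pos)
      hG.restrict ((ae_restrict_iff' measurableSet_Ioi).2 (ae_of_all _ fun u hu => ?_))
    rw [hnorm u (show (0 : ℝ) < u from one_pos.trans hu)]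
    exact min_le_right _ (u ^ (τ - 1 - α))
  rw [tailBound, integrable_indicator_iff measurableSet_Ioi, ← Ioc_union_Ioi_eq_Ioi zero_le_one]
  exact hnear.union hfar

theorem neg_tailBound_le_div {τ α t s : ℝ} (hτ0 : 0 ≤ τ) (hτ1 : τ ≤ 1) (hα : 0 ≤ 1 + α)
    (hst : s < t) :
    -tailBound τ α (-max |t| 1 - s) ≤
      (max (|t| ^ τ - 1) 0 - max (|s| ^ τ - 1) 0) / (t - s) ^ (1 + α) := by
  set m := max |t| 1
  have hm1 : 1 ≤ m := le_max_right _ _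
  have htm : |t| ≤ m := le_max_left _ _
  have hden : 0 < (t - s) ^ (1 + α) := rpow_pos_of_pos (by linarith) _
  rw [max_rpow_sub_one_zero_eq hτ0 (abs_nonneg t), max_rpow_sub_one_zero_eq hτ0 (abs_nonneg s),
    sub_sub_sub_cancel_right]
  by_cases hsm : -m ≤ s
  · have hs : max |s| 1 ≤ m := max_le (abs_le.2 ⟨hsm, by linarith [le_abs_self t]⟩) hm1
    rw [tailBound, indicator_of_notMem (by simpa using hsm), neg_zero]
    exact div_nonneg (by linarith [rpow_le_rpow (by positivity) hs hτ0]) hden.le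
  · set u := -m - s
    have hu : 0 < u := by linarith
    have hsu : max |s| 1 = m + u := by
      rw [abs_of_neg (by linarith), max_eq_left (by linarith)]
      ring
    have hnum := rpow_add_sub_rpow_le_min hτ0 hτ1 hm1 hu.le
    have hnum0 : 0 ≤ min (τ * u) (u ^ τ) := le_min (by positivity) (by positivity)
    have hut : u ^ (1 + α) ≤ (t - s) ^ (1 + α) :=
      rpow_le_rpow hu.le (by linarith [neg_abs_le t]) hα
    rw [tailBound, indicator_of_mem (show u ∈ Ioi 0 from hu), hsu, neg_le, ← neg_div, neg_sub]
    calc ((m + u) ^ τ - m ^ τ) / (t - s) ^ (1 + α)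
        ≤ min (τ * u) (u ^ τ) / u ^ (1 + α) := by gcongr ?_ / ?_
      _ = min (τ * u ^ (-α)) (u ^ (τ - 1 - α)) := by
        have hdiv : ∀ a, u ^ a / u ^ (1 + α) = u ^ (a - 1 - α) := fun a => by
          rw [← rpow_sub hu]
          ring_nf
        rw [← min_div_div_right (by positivity), mul_div_assoc, hdiv]
        nth_rewrite 1 [← rpow_one u]
        rw [hdiv]
        norm_num

theorem stmt_17 (τ α : ℝ) (hτ0 : 0 < τ) (hτα : τ < α) (hα1 : α < 1)
    (h : ℝ → ℝ) (hdef : ∀ t : ℝ, h t = max (|t| ^ τ - 1) 0) :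
    ∃ c : ℝ, ∀ t : ℝ,
      -c ≤ (α / Real.Gamma (1 - α)) *
        ∫ s in Set.Iio t, (h t - h s) / (t - s) ^ (1 + α) := by
  have hα0 : 0 < α := hτ0.trans hτα
  have hB := integrable_tailBound hτ0.le hτα hα1
  refine ⟨α / Gamma (1 - α) * ∫ u, tailBound τ α u, fun t => ?_⟩
  rw [← mul_neg]
  refine mul_le_mul_of_nonneg_left ?_ (div_nonneg hα0.le (Gamma_pos_of_pos (by linarith)).le)
  rw [← integral_sub_left_eq_self _ _ (-max |t| 1)]
  refine neg_integral_le_setIntegral_of_neg_le measurableSet_Iio (hB.comp_sub_left _)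
    (fun s => tailBound_nonneg hτ0.le α (-max |t| 1 - s)) fun s hs => ?_
  rw [hdef, hdef]
  exact neg_tailBound_le_div hτ0.le (by linarith) (by linarith) hs
end

section
/- Let g, h ∈ C¹([a,T]) with 0 < α < 1. Then ∫_a^T [ g(t)·D_t^α h(t) + h(t)·D_t^α g(t) ] dt · Γ(1−α) = ∫_a^T g(t)h(t)·[ (T−t)^{−α} + (t−a)^{−α} ] dt + α ∫_a^T ∫_a^t [g(t)−g(s)][h(t)−h(s)] (t−s)^{−1−α} ds dt − ∫_a^T [ g(t)h(a) + h(t)g(a) ] (t−a)^{−α} dt, where D_t^α denotes the Caputo derivative D_t^α u(t) = (1/Γ(1−α)) ∫_a^t u'(s)(t−s)^{−α} ds. -/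
/-!
For fixed `t`, differentiate `s ↦ (g t - g s) * (h t - h s) * (t - s) ^ (-α)` and integrate over
`[a, t]`: since `g` and `h` are Lipschitz this function vanishes to order `2 - α` at `s = t`, so
only its value at `s = a` survives. This expresses
`g t * ∫ h' (t - s) ^ (-α) + h t * ∫ g' (t - s) ^ (-α)` as the same integral for `(g h)'`, plus
`α` times the double-difference integral, plus that boundary value. Integrating in `t`, Fubini on the triangle `a < s < t < T` followed by an
integration by parts against `(T - s) ^ (1 - α) / (1 - α)` evaluates the `(g h)'` part, and
expanding the boundary value gives the remaining terms.
-/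

open MeasureTheory Set
open scoped NNReal

section Kernel

variable {r : ℝ}

lemma intervalIntegrable_sub_rpow (hr : -1 < r) (t a b : ℝ) :
    IntervalIntegrable (fun s => (t - s) ^ r) volume a b := by
  simpa using
    (intervalIntegral.intervalIntegrable_rpow' hr (a := t - a) (b := t - b)).comp_sub_left t

lemma intervalIntegrable_rpow_sub (hr : -1 < r) (c a b : ℝ) :
    IntervalIntegrable (fun t => (t - c) ^ r) volume a b := by
  simpa using
    (intervalIntegral.intervalIntegrable_rpow' hr (a := a - c) (b := b - c)).comp_sub_right c

lemma integral_rpow_sub (hr : -1 < r) (c T : ℝ) :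
    ∫ t in c..T, (t - c) ^ r = (T - c) ^ (r + 1) / (r + 1) := by
  rw [intervalIntegral.integral_comp_sub_right (fun x => x ^ r), integral_rpow (Or.inl hr),
    sub_self, Real.zero_rpow (by linarith), sub_zero]

end Kernel

section Triangle

variable {a T : ℝ}

lemma setIntegral_Ioc_ite_lt_left {t : ℝ} (hat : a ≤ t) (htT : t ≤ T) (f : ℝ → ℝ) :
    ∫ s in Ioc a T, (if s < t then f s else 0) = ∫ s in a..t, f s := by
  have hset : Iio t ∩ Ioc a T = Ioo a t := by
    ext s; simp only [mem_inter_iff, mem_Iio, mem_Ioc, mem_Ioo]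
    exact ⟨fun h => ⟨h.2.1, h.1⟩, fun h => ⟨h.2, h.1, by linarith [h.2]⟩⟩
  have hind : (fun s => if s < t then f s else 0) = (Iio t).indicator f := by
    ext s; simp [indicator_apply]
  rw [hind, integral_indicator measurableSet_Iio, Measure.restrict_restrict measurableSet_Iio,
    hset, ← integral_Ioc_eq_integral_Ioo, intervalIntegral.integral_of_le hat]

lemma setIntegral_Ioc_ite_lt_right {s : ℝ} (has : a ≤ s) (hsT : s ≤ T) (f : ℝ → ℝ) :
    ∫ t in Ioc a T, (if s < t then f t else 0) = ∫ t in s..T, f t := by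
  have hset : Ioi s ∩ Ioc a T = Ioc s T := by
    ext t; simp only [mem_inter_iff, mem_Ioi, mem_Ioc]
    exact ⟨fun h => ⟨h.1, h.2.2⟩, fun h => ⟨h.1, by linarith [h.1], h.2⟩⟩
  have hind : (fun t => if s < t then f t else 0) = (Ioi s).indicator f := by
    ext t; simp [indicator_apply]
  rw [hind, integral_indicator measurableSet_Ioi, Measure.restrict_restrict measurableSet_Ioi,
    hset, intervalIntegral.integral_of_le hsT]

noncomputable def triangleIndicator (F : ℝ → ℝ → ℝ) (q : ℝ × ℝ) : ℝ :=
  if q.2 < q.1 then F q.1 q.2 else 0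

variable {F : ℝ → ℝ → ℝ}

lemma integral_integral_swap_triangle (haT : a ≤ T)
    (hF : Integrable (triangleIndicator F)
      ((volume.restrict (Ioc a T)).prod (volume.restrict (Ioc a T)))) :
    ∫ t in a..T, ∫ s in a..t, F t s = ∫ s in a..T, ∫ t in s..T, F t s := by
  rw [intervalIntegral.integral_of_le haT, intervalIntegral.integral_of_le haT]
  calc ∫ t in Ioc a T, ∫ s in a..t, F t s
      = ∫ t in Ioc a T, ∫ s in Ioc a T, (if s < t then F t s else 0) :=
        setIntegral_congr_fun measurableSet_Ioc fun t ht =>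
          (setIntegral_Ioc_ite_lt_left ht.1.le ht.2 _).symm
    _ = ∫ s in Ioc a T, ∫ t in Ioc a T, (if s < t then F t s else 0) :=
        integral_integral_swap hF
    _ = ∫ s in Ioc a T, ∫ t in s..T, F t s :=
        setIntegral_congr_fun measurableSet_Ioc fun s hs =>
          setIntegral_Ioc_ite_lt_right hs.1.le hs.2 _

lemma intervalIntegrable_integral_triangle (haT : a ≤ T)
    (hF : Integrable (triangleIndicator F)
      ((volume.restrict (Ioc a T)).prod (volume.restrict (Ioc a T)))) :
    IntervalIntegrable (fun t => ∫ s in a..t, F t s) volume a T := by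
  rw [intervalIntegrable_iff_integrableOn_Ioc_of_le haT]
  refine hF.integral_prod_left.congr ?_
  filter_upwards [ae_restrict_mem measurableSet_Ioc] with t ht
  exact setIntegral_Ioc_ite_lt_left ht.1.le ht.2 _

lemma integrable_triangleIndicator_sub_rpow {r : ℝ} (hr : -1 < r) :
    Integrable (triangleIndicator fun t s => (t - s) ^ r)
      ((volume.restrict (Ioc a T)).prod (volume.restrict (Ioc a T))) := by
  have hmeas : Measurable (triangleIndicator fun t s => (t - s) ^ r) :=
    Measurable.ite (measurableSet_lt measurable_snd measurable_fst) (by fun_prop)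
      measurable_const
  refine (integrable_prod_iff' hmeas.aestronglyMeasurable).2 ⟨?_, ?_⟩ <;>
    simp only [triangleIndicator]
  · refine ae_of_all _ fun s => ?_
    have hind : (fun t => if s < t then (t - s) ^ r else 0)
        = (Ioi s).indicator fun t => (t - s) ^ r := by
      ext t; simp [indicator_apply]
    rw [hind]
    exact (intervalIntegrable_rpow_sub hr s a T).1.indicator measurableSet_Ioi
  · have hW : Continuous fun s : ℝ => (T - s) ^ (r + 1) / (r + 1) :=
      ((continuous_const.sub continuous_id).rpow_const
        fun _ => Or.inr (by linarith)).div_const _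
    refine hW.integrableOn_Ioc.congr_fun (fun s hs => ?_) measurableSet_Ioc
    have hnorm : ∀ t, ‖if s < t then (t - s) ^ r else 0‖ = if s < t then (t - s) ^ r else 0 := by
      intro t
      split_ifs with h
      · exact Real.norm_of_nonneg (Real.rpow_nonneg (sub_nonneg.2 h.le) r)
      · exact norm_zero
    simp only [hnorm]
    rw [setIntegral_Ioc_ite_lt_right hs.1.le hs.2, integral_rpow_sub hr]

lemma integrable_triangleIndicator_of_abs_le_rpow {r C : ℝ} (hr : -1 < r)
    (hF : AEStronglyMeasurable (triangleIndicator F)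
      ((volume.restrict (Ioc a T)).prod (volume.restrict (Ioc a T))))
    (hb : ∀ t ∈ Ioc a T, ∀ s ∈ Ioc a T, s < t → |F t s| ≤ C * (t - s) ^ r) :
    Integrable (triangleIndicator F)
      ((volume.restrict (Ioc a T)).prod (volume.restrict (Ioc a T))) := by
  refine ((integrable_triangleIndicator_sub_rpow hr).const_mul C).mono' hF ?_
  rw [Measure.prod_restrict]
  filter_upwards [ae_restrict_mem (measurableSet_Ioc.prod measurableSet_Ioc)] with q hq
  unfold triangleIndicator
  split_ifs with h
  · exact hb q.1 hq.1 q.2 hq.2 h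
  · simp

lemma integrable_triangleIndicator_mul_sub_rpow {f : ℝ → ℝ} {r : ℝ} (hr : -1 < r)
    (hf : Continuous f) :
    Integrable (triangleIndicator fun t s => f s * (t - s) ^ r)
      ((volume.restrict (Ioc a T)).prod (volume.restrict (Ioc a T))) := by
  obtain ⟨C, hC⟩ := isCompact_Icc.exists_bound_of_continuousOn (hf.continuousOn (s := Icc a T))
  have hmeas : Measurable (triangleIndicator fun t s => f s * (t - s) ^ r) :=
    Measurable.ite (measurableSet_lt measurable_snd measurable_fst)
      ((hf.measurable.comp measurable_snd).mul (by fun_prop)) measurable_const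
  refine integrable_triangleIndicator_of_abs_le_rpow (C := C) hr hmeas.aestronglyMeasurable
    fun t _ s hs hst => ?_
  have hk := Real.rpow_nonneg (sub_nonneg.2 hst.le) r
  rw [abs_mul, abs_of_nonneg hk]
  exact mul_le_mul_of_nonneg_right (hC s ⟨hs.1.le, hs.2⟩) hk

lemma integral_integral_deriv_mul_sub_rpow {u u' : ℝ → ℝ} {r : ℝ} (hr : -1 < r) (haT : a ≤ T)
    (hu : ∀ x, HasDerivAt u (u' x) x) (hu' : Continuous u') :
    ∫ t in a..T, ∫ s in a..t, u' s * (t - s) ^ r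
      = ∫ t in a..T, (u t * (T - t) ^ r - u a * (t - a) ^ r) := by
  set W : ℝ → ℝ := fun s => (T - s) ^ (r + 1) / (r + 1)
  have hW : ∀ x ∈ Ioo (min a T) (max a T), HasDerivAt W (-(T - x) ^ r) x := by
    intro x hx
    have hx : T - x ≠ 0 := sub_ne_zero.2 (lt_of_lt_of_le hx.2 (max_le haT le_rfl)).ne'
    refine ((((hasDerivAt_id x).const_sub T).rpow_const (p := r + 1) (Or.inl hx)).div_const
      (r + 1)).congr_deriv ?_
    rw [add_sub_cancel_right]
    field_simp [show r + 1 ≠ 0 by linarith]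
    simp
  have hWc : ContinuousOn W (uIcc a T) :=
    (((continuous_const.sub continuous_id).rpow_const
      fun _ => Or.inr (by linarith)).div_const _).continuousOn
  have hu_cont : ContinuousOn u (uIcc a T) := fun x _ => (hu x).continuousAt.continuousWithinAt
  have hparts := intervalIntegral.integral_mul_deriv_eq_deriv_mul_of_hasDerivAt hWc hu_cont hW
    (fun x _ => hu x) (intervalIntegrable_sub_rpow hr T a T).neg (hu'.intervalIntegrable a T)
  calc ∫ t in a..T, ∫ s in a..t, u' s * (t - s) ^ r
      = ∫ s in a..T, W s * u' s := by
        rw [integral_integral_swap_triangle haT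
          (integrable_triangleIndicator_mul_sub_rpow hr hu')]
        refine intervalIntegral.integral_congr fun s _ => ?_
        rw [intervalIntegral.integral_const_mul, integral_rpow_sub hr, mul_comm]
    _ = (∫ t in a..T, u t * (T - t) ^ r) - u a * W a := by
        rw [hparts]
        simp only [W, sub_self, Real.zero_rpow (show r + 1 ≠ 0 by linarith), zero_div, zero_mul,
          intervalIntegral.integral_neg, neg_mul, mul_comm (u _)]
        ring
    _ = ∫ t in a..T, (u t * (T - t) ^ r - u a * (t - a) ^ r) := by
        rw [intervalIntegral.integral_sub
            ((intervalIntegrable_sub_rpow hr T a T).continuousOn_mul hu_cont)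
            ((intervalIntegrable_rpow_sub hr a a T).const_mul _),
          intervalIntegral.integral_const_mul, integral_rpow_sub hr]

end Triangle

lemma abs_sub_mul_sub_le_mul_sq {g h : ℝ → ℝ} {Kg Kh : ℝ≥0} {S : Set ℝ}
    (hg : LipschitzOnWith Kg g S) (hh : LipschitzOnWith Kh h S) {x y : ℝ} (hx : x ∈ S)
    (hy : y ∈ S) : |(g x - g y) * (h x - h y)| ≤ Kg * Kh * (x - y) ^ 2 := by
  rw [abs_mul, ← sq_abs (x - y), ← Real.dist_eq, ← Real.dist_eq, ← Real.dist_eq]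
  calc dist (g x) (g y) * dist (h x) (h y) ≤ (Kg * dist x y) * (Kh * dist x y) :=
        mul_le_mul (hg.dist_le_mul x hx y hy) (hh.dist_le_mul x hx y hy) dist_nonneg
          (by positivity)
    _ = Kg * Kh * dist x y ^ 2 := by ring

lemma abs_mul_rpow_le_of_abs_le_sq {ψ x C γ : ℝ} (hx : 0 < x) (hψ : |ψ| ≤ C * x ^ 2) :
    |ψ * x ^ γ| ≤ C * x ^ (2 + γ) := by
  rw [abs_mul, abs_of_pos (Real.rpow_pos_of_pos hx γ), Real.rpow_add hx, Real.rpow_two,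
    ← mul_assoc]
  exact mul_le_mul_of_nonneg_right hψ (Real.rpow_nonneg hx.le γ)

lemma continuousOn_mul_sub_rpow_of_abs_le_sq {ψ : ℝ → ℝ} {a t C γ : ℝ}
    (hψc : ContinuousOn ψ (Icc a t)) (hψ : ∀ s ∈ Icc a t, |ψ s| ≤ C * (t - s) ^ 2)
    (hγ : -2 < γ) : ContinuousOn (fun s => ψ s * (t - s) ^ γ) (Icc a t) := by
  intro s hs
  rcases hs.2.lt_or_eq with hst | rfl
  · exact (hψc s hs).mul ((continuous_const.sub continuous_id).continuousAt.rpow_const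
      (Or.inl (sub_ne_zero.2 hst.ne'))).continuousWithinAt
  · have hbound : ContinuousAt (fun s' => C * (s - s') ^ (2 + γ)) s :=
      ((continuous_const.sub continuous_id).rpow_const
        fun _ => Or.inr (by linarith)).continuousAt.const_mul C
    have hlim := hbound.continuousWithinAt (s := Ico a s)
    rw [← continuousWithinAt_sdiff_self, Icc_sdiff_right]
    have hψs : ψ s = 0 := abs_nonpos_iff.1 (by simpa using hψ s hs)
    simp only [ContinuousWithinAt, sub_self, Real.zero_rpow (show 2 + γ ≠ 0 by linarith),
      mul_zero, hψs, zero_mul] at hlim ⊢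
    exact squeeze_zero_norm' (eventually_nhdsWithin_of_forall fun s' hs' =>
      abs_mul_rpow_le_of_abs_le_sq (sub_pos.2 hs'.2) (hψ s' (Ico_subset_Icc_self hs'))) hlim

section Lipschitz

variable {g h : ℝ → ℝ} {Kg Kh : ℝ≥0} {a T γ : ℝ}

lemma continuousOn_sub_mul_sub_mul_rpow (hg : LipschitzOnWith Kg g (Icc a T))
    (hh : LipschitzOnWith Kh h (Icc a T)) (haT : a ≤ T) (hγ : -2 < γ) :
    ContinuousOn (fun s => (g T - g s) * (h T - h s) * (T - s) ^ γ) (Icc a T) :=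
  continuousOn_mul_sub_rpow_of_abs_le_sq
    ((continuousOn_const.sub hg.continuousOn).mul (continuousOn_const.sub hh.continuousOn))
    (fun _ hs => abs_sub_mul_sub_le_mul_sq hg hh ⟨haT, le_rfl⟩ hs) hγ

lemma integrable_triangleIndicator_sub_mul_sub_mul_rpow (hg : LipschitzOnWith Kg g (Icc a T))
    (hh : LipschitzOnWith Kh h (Icc a T)) (hgm : Measurable g) (hhm : Measurable h)
    (hγ : -3 < γ) :
    Integrable (triangleIndicator fun t s => (g t - g s) * (h t - h s) * (t - s) ^ γ)
      ((volume.restrict (Ioc a T)).prod (volume.restrict (Ioc a T))) := by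
  have hmeas :
      Measurable (triangleIndicator fun t s => (g t - g s) * (h t - h s) * (t - s) ^ γ) :=
    Measurable.ite (measurableSet_lt measurable_snd measurable_fst) (by fun_prop)
      measurable_const
  exact integrable_triangleIndicator_of_abs_le_rpow (C := Kg * Kh) (by linarith : -1 < 2 + γ)
    hmeas.aestronglyMeasurable fun t ht s hs hst => abs_mul_rpow_le_of_abs_le_sq (sub_pos.2 hst)
      (abs_sub_mul_sub_le_mul_sq hg hh (Ioc_subset_Icc_self ht) (Ioc_subset_Icc_self hs))

end Lipschitz

section Caputo

variable {α : ℝ} {g h : ℝ → ℝ} {a : ℝ}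

lemma caputo_leibniz_identity (hα : α < 1) (hg : ContDiff ℝ 1 g) (hh : ContDiff ℝ 1 h) {t : ℝ}
    (hat : a ≤ t) :
    g t * (∫ s in a..t, deriv h s * (t - s) ^ (-α))
        + h t * (∫ s in a..t, deriv g s * (t - s) ^ (-α))
      = (∫ s in a..t, (deriv g s * h s + g s * deriv h s) * (t - s) ^ (-α))
        + α * (∫ s in a..t, (g t - g s) * (h t - h s) * (t - s) ^ (-1 - α))
        + (g t - g a) * (h t - h a) * (t - a) ^ (-α) := by
  obtain ⟨Kg, hKg⟩ := hg.contDiffOn.exists_lipschitzOnWith one_ne_zero (convex_Icc a t)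
    isCompact_Icc
  obtain ⟨Kh, hKh⟩ := hh.contDiffOn.exists_lipschitzOnWith one_ne_zero (convex_Icc a t)
    isCompact_Icc
  have hgc := hg.continuous
  have hhc := hh.continuous
  have hg' := hg.continuous_deriv le_rfl
  have hh' := hh.continuous_deriv le_rfl
  have hk := intervalIntegrable_sub_rpow (r := -α) (by linarith) t a t
  have hφ : IntervalIntegrable (fun s => (g t - g s) * (h t - h s) * (t - s) ^ (-1 - α))
      volume a t :=
    (continuousOn_sub_mul_sub_mul_rpow hKg hKh hat (by linarith)).intervalIntegrable_of_Icc hat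
  have hψ : IntervalIntegrable
      (fun s => (deriv g s * (h t - h s) + (g t - g s) * deriv h s) * (t - s) ^ (-α))
      volume a t :=
    hk.continuousOn_mul (by fun_prop)
  have hparts : ∫ s in a..t, (α * ((g t - g s) * (h t - h s) * (t - s) ^ (-1 - α))
        - (deriv g s * (h t - h s) + (g t - g s) * deriv h s) * (t - s) ^ (-α))
      = -((g t - g a) * (h t - h a) * (t - a) ^ (-α)) := by
    refine (intervalIntegral.integral_eq_sub_of_hasDerivAt_of_le hat
      (continuousOn_sub_mul_sub_mul_rpow (γ := -α) hKg hKh hat (by linarith)) (fun x hx => ?_)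
      ((hφ.const_mul α).sub hψ)).trans (by simp only [sub_self, zero_mul, zero_sub])
    have hx : t - x ≠ 0 := sub_ne_zero.2 hx.2.ne'
    refine ((((hasDerivAt_const x (g t)).sub (hg.differentiable one_ne_zero x).hasDerivAt).mul
      ((hasDerivAt_const x (h t)).sub (hh.differentiable one_ne_zero x).hasDerivAt)).mul
      (((hasDerivAt_id x).const_sub t).rpow_const (p := -α) (Or.inl hx))).congr_deriv ?_
    rw [show -α - 1 = -1 - α by ring]
    simp only [id, Pi.sub_apply, Pi.mul_apply]
    ring
  calc g t * (∫ s in a..t, deriv h s * (t - s) ^ (-α))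
        + h t * (∫ s in a..t, deriv g s * (t - s) ^ (-α))
      = ∫ s in a..t, ((deriv g s * h s + g s * deriv h s) * (t - s) ^ (-α)
          + α * ((g t - g s) * (h t - h s) * (t - s) ^ (-1 - α))
          - (α * ((g t - g s) * (h t - h s) * (t - s) ^ (-1 - α))
            - (deriv g s * (h t - h s) + (g t - g s) * deriv h s) * (t - s) ^ (-α))) := by
        rw [← intervalIntegral.integral_const_mul, ← intervalIntegral.integral_const_mul,
          ← intervalIntegral.integral_add ((hk.continuousOn_mul hh'.continuousOn).const_mul _)
            ((hk.continuousOn_mul hg'.continuousOn).const_mul _)]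
        exact intervalIntegral.integral_congr fun s _ => by ring
    _ = _ := by
        rw [intervalIntegral.integral_sub ((hk.continuousOn_mul (by fun_prop)).add
            (hφ.const_mul α)) ((hφ.const_mul α).sub hψ),
          intervalIntegral.integral_add (hk.continuousOn_mul (by fun_prop)) (hφ.const_mul α),
          intervalIntegral.integral_const_mul, hparts]
        ring

lemma integral_caputo_leibniz_identity (hα : α < 1) {T : ℝ} (haT : a ≤ T)
    (hg : ContDiff ℝ 1 g) (hh : ContDiff ℝ 1 h) :
    ∫ t in a..T, (g t * (∫ s in a..t, deriv h s * (t - s) ^ (-α))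
        + h t * (∫ s in a..t, deriv g s * (t - s) ^ (-α)))
      = (∫ t in a..T, g t * h t * ((T - t) ^ (-α) + (t - a) ^ (-α)))
        + α * (∫ t in a..T, ∫ s in a..t, (g t - g s) * (h t - h s) * (t - s) ^ (-1 - α))
        - ∫ t in a..T, (g t * h a + h t * g a) * (t - a) ^ (-α) := by
  have hr : -1 < -α := by linarith
  have hgc := hg.continuous
  have hhc := hh.continuous
  have hg' := hg.continuous_deriv le_rfl
  have hh' := hh.continuous_deriv le_rfl
  obtain ⟨Kg, hKg⟩ := hg.contDiffOn.exists_lipschitzOnWith one_ne_zero (convex_Icc a T)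
    isCompact_Icc
  obtain ⟨Kh, hKh⟩ := hh.contDiffOn.exists_lipschitzOnWith one_ne_zero (convex_Icc a T)
    isCompact_Icc
  have hP := intervalIntegrable_integral_triangle haT
    (integrable_triangleIndicator_mul_sub_rpow (f := fun s => deriv g s * h s + g s * deriv h s)
      hr (by fun_prop))
  have hK := intervalIntegrable_integral_triangle haT
    (integrable_triangleIndicator_sub_mul_sub_mul_rpow (γ := -1 - α) hKg hKh hgc.measurable
      hhc.measurable (by linarith))
  have hkT := intervalIntegrable_sub_rpow hr T a T
  have hka := intervalIntegrable_rpow_sub hr a a T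
  have hboundary : (∫ t in a..T, (g t * h t * (T - t) ^ (-α) - g a * h a * (t - a) ^ (-α)))
        + ∫ t in a..T, (g t - g a) * (h t - h a) * (t - a) ^ (-α)
      = (∫ t in a..T, g t * h t * ((T - t) ^ (-α) + (t - a) ^ (-α)))
        - ∫ t in a..T, (g t * h a + h t * g a) * (t - a) ^ (-α) := by
    rw [← intervalIntegral.integral_add ((hkT.continuousOn_mul (by fun_prop)).sub
        (hka.const_mul _)) (hka.continuousOn_mul (by fun_prop)),
      ← intervalIntegral.integral_sub ((hkT.add hka).continuousOn_mul (by fun_prop))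
        (hka.continuousOn_mul (by fun_prop))]
    exact intervalIntegral.integral_congr fun t _ => by ring
  rw [intervalIntegral.integral_congr fun t ht =>
      caputo_leibniz_identity hα hg hh (uIcc_of_le haT ▸ ht).1,
    intervalIntegral.integral_add (hP.add (hK.const_mul α)) (hka.continuousOn_mul (by fun_prop)),
    intervalIntegral.integral_add hP (hK.const_mul α), intervalIntegral.integral_const_mul,
    integral_integral_deriv_mul_sub_rpow (u := fun x => g x * h x) hr haT
      (fun x => (hg.differentiable one_ne_zero x).hasDerivAt.mul
        (hh.differentiable one_ne_zero x).hasDerivAt) (by fun_prop)]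
  linarith

end Caputo

theorem stmt_19_general (α a T : ℝ) (hα1 : α < 1) (haT : a < T)
    (g h : ℝ → ℝ) (hg : ContDiff ℝ 1 g) (hh : ContDiff ℝ 1 h)
    (D : (ℝ → ℝ) → ℝ → ℝ)
    (hD : ∀ u : ℝ → ℝ, ∀ t : ℝ,
      D u t = (1 / Real.Gamma (1 - α)) * ∫ s in a..t, deriv u s * (t - s) ^ (-α)) :
    Real.Gamma (1 - α) * ∫ t in a..T, (g t * D h t + h t * D g t)
      = (∫ t in a..T, g t * h t * ((T - t) ^ (-α) + (t - a) ^ (-α)))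
        + α * (∫ t in a..T, ∫ s in a..t,
            (g t - g s) * (h t - h s) * (t - s) ^ (-1 - α))
        - ∫ t in a..T, (g t * h a + h t * g a) * (t - a) ^ (-α) := by
  have hΓ : Real.Gamma (1 - α) ≠ 0 := (Real.Gamma_pos_of_pos (by linarith)).ne'
  rw [← integral_caputo_leibniz_identity hα1 haT.le hg hh,
    ← intervalIntegral.integral_const_mul]
  refine intervalIntegral.integral_congr fun t _ => ?_
  rw [hD h, hD g]
  field_simp

theorem stmt_19 (α a T : ℝ) (hα0 : 0 < α) (hα1 : α < 1) (haT : a < T)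
    (g h : ℝ → ℝ) (hg : ContDiff ℝ 1 g) (hh : ContDiff ℝ 1 h)
    (D : (ℝ → ℝ) → ℝ → ℝ)
    (hD : ∀ u : ℝ → ℝ, ∀ t : ℝ,
      D u t = (1 / Real.Gamma (1 - α)) * ∫ s in a..t, deriv u s * (t - s) ^ (-α)) :
    Real.Gamma (1 - α) * ∫ t in a..T, (g t * D h t + h t * D g t)
      = (∫ t in a..T, g t * h t * ((T - t) ^ (-α) + (t - a) ^ (-α)))
        + α * (∫ t in a..T, ∫ s in a..t,
            (g t - g s) * (h t - h s) * (t - s) ^ (-1 - α))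
        - ∫ t in a..T, (g t * h a + h t * g a) * (t - a) ^ (-α) :=
  stmt_19_general α a T hα1 haT g h hg hh D hD
end
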